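/- Let G_r(Γ, 0) := ({z ∈ ℂⁿ : |z| > r, z/|z| ∈ Γ} ⊔ Γ∞) × {t ∈ ℂ^m : |t| < 1/r} for r > 0 and Γ ⊂ S^{2n-1} open, and let Ũ ⊂ ℂⁿ × ℂ^m be a bounded open subset. Then the open set U := G_r(Γ, 0) ∪ Ũ ⊂ 𝔻_{ℂⁿ} × ℂ^m satisfies N^L_∞(U) = U ∩ X_∞, and hence U is regular at ∞. -/

import Mathlib

/-
Far out along a ray `ℝ₊ζ × {t}` the bounded set `Ũ` is left behind, and membership in
`G_r(Γ, 0)` only depends on whether `ζ ∈ Γ` and `|t| < 1/r`, which is also the condition for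
`(ζ∞, t) ∈ U`. So the ray eventually lies in `U` or eventually avoids it according as
`(ζ∞, t) ∈ U`, and this gives `N^L_∞(U) = U ∩ X_∞`. For regularity, `N¹_∞(U) ⊆ N^L_∞(U)` holds
for every `U`; conversely a sequence `(z_k, t_k)` converging to `(ζ∞, t)` with `ζ ∈ Γ` has
`|z_k| → ∞` and `z_k/|z_k| → ζ`, so it eventually enters the cone since `Γ` is open.
Convergence in `𝔻_E` is read off through `z ↦ z/(1 + |z|)`, the inverse of the homeomorphism `φ`.
-/

open Metric Filter

noncomputable section

/-- `ℂⁿ` with the Euclidean norm. -/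
abbrev Cn (n : ℕ) := EuclideanSpace ℂ (Fin n)

/-- The radial compactification `𝔻_E` of `E = ℂⁿ`, as the disjoint union of `ℂⁿ`
and a copy `S^{2n-1}∞` of the unit sphere. -/
abbrev DE (n : ℕ) := Cn n ⊕ Metric.sphere (0 : Cn n) 1

/-- The bijection `φ : D → 𝔻_E`, `φ(z) = z/(1-|z|)` on the open ball and `φ(z) = z∞`
on the boundary sphere. -/
noncomputable def phiD (n : ℕ) : Metric.closedBall (0 : Cn n) 1 → DE n :=
  fun z =>
    if h : ‖(z : Cn n)‖ < 1 then
      Sum.inl ((1 - ‖(z : Cn n)‖)⁻¹ • (z : Cn n))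
    else
      Sum.inr ⟨(z : Cn n), by
        have h1 : ‖(z : Cn n)‖ ≤ 1 := mem_closedBall_zero_iff.mp z.2
        exact mem_sphere_zero_iff_norm.mpr (le_antisymm h1 (not_lt.mp h))⟩

/-- The topology on `𝔻_E`, transported from the closed unit ball via `φ`
(so that `φ` is a homeomorphism). -/
instance DEtop (n : ℕ) : TopologicalSpace (DE n) :=
  TopologicalSpace.coinduced (phiD n) inferInstance

/-- The space of holomorphic parameters `T = ℂᵐ`. -/
abbrev Tm (m : ℕ) := EuclideanSpace ℂ (Fin m)

/-- The partial radial compactification `X̂ = 𝔻_E × T`. -/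
abbrev Xhat (n m : ℕ) := DE n × Tm m

/-- The set at infinity `X_∞ = X̂ ∖ X`. -/
def Xinf (n m : ℕ) : Set (Xhat n m) := {p | ∃ x t, p = (Sum.inr x, t)}

/-- The finite part `X = E × T` inside `X̂`. -/
def finiteX (n m : ℕ) : Set (Xhat n m) := {p | ∃ z t, p = (Sum.inl z, t)}

/-- `clos¹_∞(A)`: the set of points `(z∞, t) ∈ X_∞` which are limits of sequences
`(z_k, t_k) ∈ A ∩ X` with `|z_{k+1}|/|z_k| → 1`. -/
def closOneInf {n m : ℕ} (A : Set (Xhat n m)) : Set (Xhat n m) :=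
  {p | p ∈ Xinf n m ∧ ∃ (z : ℕ → Cn n) (ts : ℕ → Tm m),
    (∀ k, ((Sum.inl (z k) : DE n), ts k) ∈ A) ∧
    Tendsto (fun k => ((Sum.inl (z k) : DE n), ts k)) atTop (nhds p) ∧
    Tendsto (fun k => ‖z (k + 1)‖ / ‖z k‖) atTop (nhds 1)}

/-- `N¹_∞(A) := X_∞ ∖ clos¹_∞(X ∖ A)`. -/
def NOneInf {n m : ℕ} (A : Set (Xhat n m)) : Set (Xhat n m) :=
  Xinf n m \ closOneInf (finiteX n m \ A)

/-- An open subset `U ⊂ X̂` is regular at `∞` if `N¹_∞(U) = U ∩ X_∞`. -/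
def RegularAtInf {n m : ℕ} (U : Set (Xhat n m)) : Prop :=
  NOneInf U = U ∩ Xinf n m

/-- `N^L_∞(A)`: points `(ζ∞, t) ∈ X_∞` lying in the closure in `X̂` of
`(ℝ₊ζ × {t}) ∩ A`. -/
def NLInf {n m : ℕ} (A : Set (Xhat n m)) : Set (Xhat n m) :=
  {p | ∃ (ζ : Metric.sphere (0 : Cn n) 1) (t : Tm m), p = (Sum.inr ζ, t) ∧
    p ∈ closure ({q : Xhat n m | ∃ r : ℝ, 0 < r ∧
      q = (Sum.inl (r • (ζ : Cn n)), t)} ∩ A)}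

/-- The conical neighborhood `G_r(Γ, 0) ⊂ X̂`: the product of
`({z : |z| > r, z/|z| ∈ Γ} ⊔ Γ∞)` with `{t : |t| < 1/r}` (a point `z` with
`|z| > r > 0` and `z/|z| ∈ Γ` being written as `z = s • x` with `s = |z| > r`,
`x ∈ Γ`). -/
def Gcone {n m : ℕ} (r : ℝ) (Γ : Set (Metric.sphere (0 : Cn n) 1)) :
    Set (Xhat n m) :=
  {p | (∃ x ∈ Γ, ∃ s : ℝ, r < s ∧ 0 < s ∧ p.1 = Sum.inl (s • (x : Cn n))) ∨
        (∃ x ∈ Γ, p.1 = Sum.inr x)} ∩ {p | ‖p.2‖ < r⁻¹}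

open Topology

lemma smul_eq_smul_iff_of_mem_sphere {E : Type*} [NormedAddCommGroup E] [NormedSpace ℝ E]
    {x y : sphere (0 : E) 1} {s s' : ℝ} (hs : 0 < s) (hs' : 0 < s') :
    s • (x : E) = s' • (y : E) ↔ s = s' ∧ x = y := by
  refine ⟨fun h => ?_, fun ⟨hss', hxy⟩ => by rw [hss', hxy]⟩
  have hss' : s = s' := by
    simpa [norm_smul, abs_of_pos hs, abs_of_pos hs'] using congrArg norm h
  subst hss'
  exact ⟨rfl, Subtype.ext (smul_right_injective E hs.ne' h)⟩

lemma tendsto_one_add_inv_mul_self_atTop :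
    Tendsto (fun s : ℝ => (1 + s)⁻¹ * s) atTop (𝓝 1) := by
  have h : Tendsto (fun s : ℝ => 1 - (1 + s)⁻¹) atTop (𝓝 (1 - 0)) :=
    (tendsto_inv_atTop_zero.comp (tendsto_atTop_add_const_left atTop (1 : ℝ) tendsto_id)).const_sub 1
  rw [sub_zero] at h
  refine h.congr' ?_
  filter_upwards [eventually_ge_atTop 0] with s hs
  field_simp
  ring

lemma tendsto_add_natCast_succ_div_add_natCast {a : ℝ} (ha : 0 < a) :
    Tendsto (fun k : ℕ => (a + (k + 1)) / (a + k)) atTop (𝓝 1) := by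
  have h : Tendsto (fun k : ℕ => 1 + (a + k)⁻¹) atTop (𝓝 (1 + 0)) :=
    tendsto_const_nhds.add (tendsto_inv_atTop_zero.comp
      (tendsto_atTop_add_const_left atTop a tendsto_natCast_atTop_atTop))
  rw [add_zero] at h
  refine h.congr fun k => ?_
  have : 0 < a + k := by positivity
  field_simp
  ring

def psiD (n : ℕ) : DE n → closedBall (0 : Cn n) 1
  | .inl z => ⟨(1 + ‖z‖)⁻¹ • z, by
      rw [mem_closedBall_zero_iff, norm_smul, norm_inv, Real.norm_of_nonneg (by positivity),
        inv_mul_le_one₀ (by positivity)]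
      linarith⟩
  | .inr x => ⟨x, sphere_subset_closedBall x.2⟩

lemma psiD_phiD (n : ℕ) (w : closedBall (0 : Cn n) 1) : psiD n (phiD n w) = w := by
  by_cases h : ‖(w : Cn n)‖ < 1
  · have hpos : 0 < 1 - ‖(w : Cn n)‖ := sub_pos.2 h
    rw [phiD, dif_pos h]
    apply Subtype.ext
    change (1 + ‖(1 - ‖(w : Cn n)‖)⁻¹ • (w : Cn n)‖)⁻¹ • (1 - ‖(w : Cn n)‖)⁻¹ • (w : Cn n) = w
    rw [norm_smul, norm_inv, Real.norm_of_nonneg hpos.le, smul_smul]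
    convert one_smul ℝ (w : Cn n)
    field_simp
    ring
  · rw [phiD, dif_neg h]
    rfl

lemma phiD_psiD (n : ℕ) (d : DE n) : phiD n (psiD n d) = d := by
  rcases d with z | x
  · have hnorm : ‖(1 + ‖z‖)⁻¹ • z‖ = ‖z‖ / (1 + ‖z‖) := by
      rw [norm_smul, norm_inv, Real.norm_of_nonneg (by positivity), inv_mul_eq_div]
    have hlt : ‖(1 + ‖z‖)⁻¹ • z‖ < 1 := by
      rw [hnorm, div_lt_one (by positivity)]
      linarith
    change phiD n ⟨(1 + ‖z‖)⁻¹ • z, _⟩ = _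
    rw [phiD, dif_pos hlt, hnorm, smul_smul]
    congr
    convert one_smul ℝ z
    field_simp
    ring
  · have h : ¬ ‖(x : Cn n)‖ < 1 := by simp
    change phiD n ⟨x, _⟩ = _
    rw [phiD, dif_neg h]

def phiDHomeomorph (n : ℕ) : closedBall (0 : Cn n) 1 ≃ₜ DE n where
  toFun := phiD n
  invFun := psiD n
  left_inv := psiD_phiD n
  right_inv := phiD_psiD n
  continuous_toFun := continuous_coinduced_rng
  continuous_invFun := by
    rw [continuous_coinduced_dom, show psiD n ∘ phiD n = id from funext (psiD_phiD n)]
    exact continuous_id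

instance (n : ℕ) : FirstCountableTopology (DE n) :=
  (phiDHomeomorph n).symm.isInducing.firstCountableTopology

section Convergence

variable {n : ℕ} {α : Type*} {l : Filter α} {z : α → Cn n} {ζ : sphere (0 : Cn n) 1}

lemma tendsto_inl_nhds_inr_iff :
    Tendsto (fun k => (Sum.inl (z k) : DE n)) l (𝓝 (Sum.inr ζ)) ↔
      Tendsto (fun k => (1 + ‖z k‖)⁻¹ • z k) l (𝓝 (ζ : Cn n)) :=
  (IsInducing.subtypeVal.comp (phiDHomeomorph n).symm.isInducing).tendsto_nhds_iff

lemma tendsto_inl_smul_atTop (ζ : sphere (0 : Cn n) 1) :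
    Tendsto (fun s : ℝ => (Sum.inl (s • (ζ : Cn n)) : DE n)) atTop (𝓝 (Sum.inr ζ)) := by
  rw [tendsto_inl_nhds_inr_iff]
  have h := tendsto_one_add_inv_mul_self_atTop.smul_const (ζ : Cn n)
  rw [one_smul] at h
  refine h.congr' ?_
  filter_upwards [eventually_ge_atTop 0] with s hs
  rw [norm_smul, norm_eq_of_mem_sphere ζ, mul_one, Real.norm_of_nonneg hs, smul_smul]

lemma tendsto_norm_atTop_of_tendsto_inl
    (h : Tendsto (fun k => (Sum.inl (z k) : DE n)) l (𝓝 (Sum.inr ζ))) :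
    Tendsto (fun k => ‖z k‖) l atTop := by
  have hnorm : Tendsto (fun k => (1 + ‖z k‖)⁻¹ * ‖z k‖) l (𝓝 1) := by
    have h' := (tendsto_inl_nhds_inr_iff.1 h).norm
    rw [norm_eq_of_mem_sphere ζ] at h'
    refine h'.congr fun k => ?_
    rw [norm_smul, norm_inv, Real.norm_of_nonneg (by positivity)]
  have hinv : Tendsto (fun k => (1 + ‖z k‖)⁻¹) l (𝓝[>] 0) := by
    refine tendsto_nhdsWithin_iff.2 ⟨?_, Eventually.of_forall fun k => Set.mem_Ioi.2 (by positivity)⟩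
    have h' := hnorm.const_sub 1
    rw [sub_self] at h'
    refine h'.congr fun k => ?_
    field_simp
    ring
  have hone := hinv.inv_tendsto_nhdsGT_zero
  simp only [Pi.inv_def, inv_inv] at hone
  exact tendsto_atTop_add_const_left l (-1) hone |>.congr fun k => by ring

lemma tendsto_inv_norm_smul_of_tendsto_inl
    (h : Tendsto (fun k => (Sum.inl (z k) : DE n)) l (𝓝 (Sum.inr ζ))) :
    Tendsto (fun k => ‖z k‖⁻¹ • z k) l (𝓝 (ζ : Cn n)) := by
  have hnorm := tendsto_norm_atTop_of_tendsto_inl h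
  have hcoef : Tendsto (fun k => ‖z k‖⁻¹ + 1) l (𝓝 1) := by
    simpa using hnorm.inv_tendsto_atTop.add_const 1
  have h' := hcoef.smul (tendsto_inl_nhds_inr_iff.1 h)
  rw [one_smul] at h'
  refine h'.congr' ?_
  filter_upwards [hnorm.eventually_gt_atTop 0] with k hk
  rw [smul_smul]
  congr 1
  field_simp

end Convergence

section Cone

variable {n m : ℕ} {r : ℝ} {Γ : Set (sphere (0 : Cn n) 1)} {ζ : sphere (0 : Cn n) 1} {t : Tm m}

lemma mem_Gcone_inr_iff : ((Sum.inr ζ, t) : Xhat n m) ∈ Gcone r Γ ↔ ζ ∈ Γ ∧ ‖t‖ < r⁻¹ := by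
  constructor
  · rintro ⟨⟨x, -, s, -, -, h⟩ | ⟨x, hx, h⟩, ht⟩
    · cases h
    · cases h
      exact ⟨hx, ht⟩
  · rintro ⟨hζ, ht⟩
    exact ⟨Or.inr ⟨ζ, hζ, rfl⟩, ht⟩

lemma mem_Gcone_inl_smul_iff {s : ℝ} (hs : 0 < s) :
    ((Sum.inl (s • (ζ : Cn n)), t) : Xhat n m) ∈ Gcone r Γ ↔ r < s ∧ ζ ∈ Γ ∧ ‖t‖ < r⁻¹ := by
  simp only [Gcone, Set.mem_inter_iff, Set.mem_ofPred_eq, Sum.inl.injEq, reduceCtorEq, and_false,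
    exists_false, or_false]
  constructor
  · rintro ⟨⟨x, hx, s', hrs', hs', hsx⟩, ht⟩
    obtain ⟨rfl, rfl⟩ := (smul_eq_smul_iff_of_mem_sphere hs hs').1 hsx
    exact ⟨hrs', hx, ht⟩
  · rintro ⟨hrs, hζ, ht⟩
    exact ⟨⟨ζ, hζ, s, hrs, hs, rfl⟩, ht⟩

lemma eventually_ray_mem_Gcone_union_iff {V : Set (Cn n × Tm m)} (hV : Bornology.IsBounded V)
    (ζ : sphere (0 : Cn n) 1) (t : Tm m) :
    ∀ᶠ s : ℝ in atTop,
      ((Sum.inl (s • (ζ : Cn n)), t) ∈ Gcone r Γ ∪ {p : Xhat n m | ∃ q ∈ V, p = (Sum.inl q.1, q.2)} ↔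
        (Sum.inr ζ, t) ∈ Gcone r Γ ∪ {p : Xhat n m | ∃ q ∈ V, p = (Sum.inl q.1, q.2)}) := by
  obtain ⟨M, hM⟩ := hV.subset_closedBall 0
  filter_upwards [eventually_gt_atTop (max M r), eventually_gt_atTop (0 : ℝ)] with s hs hs0
  have hfar : ∀ q ∈ V, s • (ζ : Cn n) ≠ q.1 := fun q hq hsq => by
    have hq : ‖q.1‖ ≤ M := (norm_fst_le q).trans (mem_closedBall_zero_iff.1 (hM hq))
    rw [← hsq, norm_smul, norm_eq_of_mem_sphere ζ, mul_one, Real.norm_of_nonneg hs0.le] at hq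
    exact (lt_of_le_of_lt (le_max_left M r) hs).not_ge hq
  simp only [Set.mem_union, Set.mem_ofPred_eq, Prod.mk.injEq, Sum.inl.injEq, reduceCtorEq,
    false_and, and_false, exists_false, or_false, mem_Gcone_inl_smul_iff hs0, mem_Gcone_inr_iff]
  refine ⟨?_, fun h => Or.inl ⟨(le_max_right M r).trans_lt hs, h⟩⟩
  rintro (⟨-, h⟩ | ⟨q, hq, hsq, -⟩)
  · exact h
  · exact absurd hsq (hfar q hq)

lemma eventually_mem_Gcone_of_tendsto {α : Type*} {l : Filter α} {z : α → Cn n} {ts : α → Tm m}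
    (hΓ : IsOpen Γ) (hζ : ζ ∈ Γ) (ht : ‖t‖ < r⁻¹)
    (h : Tendsto (fun k => ((Sum.inl (z k) : DE n), ts k)) l (𝓝 ((Sum.inr ζ, t) : Xhat n m))) :
    ∀ᶠ k in l, ((Sum.inl (z k), ts k) : Xhat n m) ∈ Gcone r Γ := by
  obtain ⟨hz, hts⟩ := (Prod.tendsto_iff _ _).1 h
  obtain ⟨V, hV, rfl⟩ := isOpen_induced_iff.1 hΓ
  filter_upwards [(tendsto_norm_atTop_of_tendsto_inl hz).eventually_gt_atTop (max r 0),
    (tendsto_inv_norm_smul_of_tendsto_inl hz).eventually_mem (hV.mem_nhds hζ),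
    hts.eventually_mem ((isOpen_lt continuous_norm continuous_const).mem_nhds ht)]
    with k hrz hdir htk
  have hpos : 0 < ‖z k‖ := (le_max_right r 0).trans_lt hrz
  refine ⟨Or.inl ⟨⟨‖z k‖⁻¹ • z k, ?_⟩, hdir, ‖z k‖, (le_max_left r 0).trans_lt hrz, hpos, ?_⟩, htk⟩
  · rw [mem_sphere_zero_iff_norm, norm_smul, norm_inv, norm_norm, inv_mul_cancel₀ hpos.ne']
  · rw [smul_inv_smul₀ hpos.ne']

end Cone

section PointsAtInfinity

variable {n m : ℕ}

lemma tendsto_ray_nhds_inr (ζ : sphere (0 : Cn n) 1) (t : Tm m) :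
    Tendsto (fun s : ℝ => ((Sum.inl (s • (ζ : Cn n)) : DE n), t)) atTop
      (𝓝 ((Sum.inr ζ, t) : Xhat n m)) :=
  (tendsto_inl_smul_atTop ζ).prodMk_nhds tendsto_const_nhds

lemma NLInf_eq_of_eventually_ray_mem_iff {U : Set (Xhat n m)}
    (hU : ∀ (ζ : sphere (0 : Cn n) 1) (t : Tm m), ∀ᶠ s : ℝ in atTop,
      ((Sum.inl (s • (ζ : Cn n)), t) ∈ U ↔ (Sum.inr ζ, t) ∈ U)) :
    NLInf U = U ∩ Xinf n m := by
  refine Set.Subset.antisymm ?_ ?_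
  · rintro _ ⟨ζ, t, rfl, hcl⟩
    refine ⟨?_, ζ, t, rfl⟩
    obtain ⟨q, hq, hlim⟩ := mem_closure_iff_seq_limit.1 hcl
    choose ρ hρ hqρ using fun k => (hq k).1
    obtain rfl : q = fun k => ((Sum.inl (ρ k • (ζ : Cn n)) : DE n), t) := funext hqρ
    have hρ_top : Tendsto ρ atTop atTop := by
      refine (tendsto_norm_atTop_of_tendsto_inl ((Prod.tendsto_iff _ _).1 hlim).1).congr fun k => ?_
      rw [norm_smul, norm_eq_of_mem_sphere ζ, mul_one, Real.norm_of_nonneg (hρ k).le]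
    obtain ⟨k, hk⟩ := (hρ_top.eventually (hU ζ t)).exists
    exact hk.1 (hq k).2
  · rintro _ ⟨hp, ζ, t, rfl⟩
    refine ⟨ζ, t, rfl, mem_closure_of_tendsto (tendsto_ray_nhds_inr ζ t) ?_⟩
    filter_upwards [eventually_gt_atTop 0, hU ζ t] with s hs hsU
    exact ⟨⟨s, hs, rfl⟩, hsU.2 hp⟩

/-- A point at infinity off the closure of its ray in `U` is the limit of the points `(a + k)ζ`
of the ray lying outside `U`, whose norms have successive ratios tending to `1`. -/
lemma NOneInf_subset_NLInf (U : Set (Xhat n m)) : NOneInf U ⊆ NLInf U := by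
  rintro _ ⟨⟨ζ, t, rfl⟩, hN⟩
  refine ⟨ζ, t, rfl, ?_⟩
  by_contra hcl
  have hfar : ∀ᶠ s : ℝ in atTop, ((Sum.inl (s • (ζ : Cn n)), t) : Xhat n m) ∉ U := by
    filter_upwards [(tendsto_ray_nhds_inr ζ t).eventually
      (not_frequently.1 (mem_closure_iff_frequently.not.1 hcl)), eventually_gt_atTop 0]
      with s hs hs0 hsU
    exact hs ⟨⟨s, hs0, rfl⟩, hsU⟩
  obtain ⟨s₀, hs₀⟩ := eventually_atTop.1 hfar
  set a := max s₀ 1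
  have ha : 0 < a := zero_lt_one.trans_le (le_max_right _ _)
  have hnorm : ∀ k : ℕ, ‖(a + k) • (ζ : Cn n)‖ = a + k := fun k => by
    rw [norm_smul, norm_eq_of_mem_sphere ζ, mul_one, Real.norm_of_nonneg (by positivity)]
  refine hN ⟨⟨ζ, t, rfl⟩, fun k => (a + k) • (ζ : Cn n), fun _ => t,
    fun k => ⟨⟨_, _, rfl⟩, hs₀ _ ((le_max_left _ _).trans (le_add_of_nonneg_right k.cast_nonneg))⟩,
    (tendsto_ray_nhds_inr ζ t).comp
      (tendsto_atTop_add_const_left _ a tendsto_natCast_atTop_atTop), ?_⟩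
  refine (tendsto_add_natCast_succ_div_add_natCast ha).congr fun k => ?_
  rw [hnorm, hnorm, Nat.cast_succ]

lemma inr_mem_NOneInf_of_Gcone_subset {r : ℝ} {Γ : Set (sphere (0 : Cn n) 1)} {U : Set (Xhat n m)}
    (hΓ : IsOpen Γ) (hGU : Gcone r Γ ⊆ U) {ζ : sphere (0 : Cn n) 1} (hζ : ζ ∈ Γ) {t : Tm m}
    (ht : ‖t‖ < r⁻¹) : ((Sum.inr ζ, t) : Xhat n m) ∈ NOneInf U := by
  refine ⟨⟨ζ, t, rfl⟩, ?_⟩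
  rintro ⟨-, z, ts, hmem, hlim, -⟩
  obtain ⟨k, hk⟩ := (eventually_mem_Gcone_of_tendsto hΓ hζ ht hlim).exists
  exact (hmem k).2 (hGU hk)

end PointsAtInfinity

theorem Gcone_union_bounded_regular_general {n m : ℕ} (r : ℝ)
    (Γ : Set (Metric.sphere (0 : Cn n) 1)) (hΓ : IsOpen Γ)
    (Utilde : Set (Cn n × Tm m))
    (hb : Bornology.IsBounded Utilde) :
    NLInf (Gcone r Γ ∪ {p : Xhat n m | ∃ q ∈ Utilde, p = (Sum.inl q.1, q.2)}) =
        (Gcone r Γ ∪ {p : Xhat n m | ∃ q ∈ Utilde, p = (Sum.inl q.1, q.2)}) ∩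
          Xinf n m ∧
      RegularAtInf
        (Gcone r Γ ∪ {p : Xhat n m | ∃ q ∈ Utilde, p = (Sum.inl q.1, q.2)}) := by
  set U : Set (Xhat n m) := Gcone r Γ ∪ {p : Xhat n m | ∃ q ∈ Utilde, p = (Sum.inl q.1, q.2)}
  have hNL : NLInf U = U ∩ Xinf n m :=
    NLInf_eq_of_eventually_ray_mem_iff (eventually_ray_mem_Gcone_union_iff hb)
  refine ⟨hNL, ((NOneInf_subset_NLInf _).trans hNL.le).antisymm ?_⟩
  rintro _ ⟨hp, ζ, t, rfl⟩
  obtain ⟨hζ, ht⟩ := mem_Gcone_inr_iff.1 (hp.resolve_right fun ⟨_, _, h⟩ => by cases h)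
  exact inr_mem_NOneInf_of_Gcone_subset hΓ Set.subset_union_left hζ ht

/-- For `r > 0`, `Γ ⊂ S^{2n-1}` open and `Ũ ⊂ ℂⁿ × ℂᵐ` a bounded open subset, the
open set `U := G_r(Γ, 0) ∪ Ũ ⊂ 𝔻_{ℂⁿ} × ℂᵐ` satisfies `N^L_∞(U) = U ∩ X_∞`,
and hence `U` is regular at `∞`. -/
theorem Gcone_union_bounded_regular {n m : ℕ} (r : ℝ) (hr : 0 < r)
    (Γ : Set (Metric.sphere (0 : Cn n) 1)) (hΓ : IsOpen Γ)
    (Utilde : Set (Cn n × Tm m)) (hU : IsOpen Utilde)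
    (hb : Bornology.IsBounded Utilde) :
    NLInf (Gcone r Γ ∪ {p : Xhat n m | ∃ q ∈ Utilde, p = (Sum.inl q.1, q.2)}) =
        (Gcone r Γ ∪ {p : Xhat n m | ∃ q ∈ Utilde, p = (Sum.inl q.1, q.2)}) ∩
          Xinf n m ∧
      RegularAtInf
        (Gcone r Γ ∪ {p : Xhat n m | ∃ q ∈ Utilde, p = (Sum.inl q.1, q.2)}) :=
  Gcone_union_bounded_regular_general r Γ hΓ Utilde hb
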